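/- Let γ ∈ (0,1], σ > 3 and α ∈ [0,1/2) with σ − α > 3. There exists a constant C > 0, depending only on γ, σ and α, such that for every z ≥ 0, every t ≥ 0 and every k ∈ ℤ³ with k ≠ 0, one has ∑_{ℓ ∈ ℤ³, ℓ ≠ 0, ℓ ≠ k} [exp(z⟨k,kt⟩^γ)·⟨k,kt⟩^σ] / [exp(z⟨ℓ,ℓt⟩^γ)·⟨ℓ,ℓt⟩^σ · exp(z⟨k−ℓ,(k−ℓ)t⟩^γ)·⟨k−ℓ,(k−ℓ)t⟩^σ] · |ℓ|^α·|k−ℓ|^α / |k|^α ≤ C. -/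

import Mathlib

/-!
Since `⟨k,kt⟩ ≤ ⟨ℓ,ℓt⟩ + ⟨k-ℓ,(k-ℓ)t⟩` and `x ↦ x^γ` is subadditive for `γ ≤ 1`, the exponential
weights cancel. As `|k| ≥ 1`, we have `⟨k,kt⟩ ≤ √2 √(1+t²) |k|`, while `√(1+t²) |ℓ| ≤ ⟨ℓ,ℓt⟩`;
so the factor `(|ℓ||k-ℓ|/|k|)^α` costs at most `(√2 ⟨ℓ,ℓt⟩⟨k-ℓ,(k-ℓ)t⟩/⟨k,kt⟩)^α`, and the
kernel is bounded by `√2^α (⟨ℓ,ℓt⟩⁻¹ + ⟨k-ℓ,(k-ℓ)t⟩⁻¹)^(σ-α) ≲ ⟨ℓ,0⟩^(α-σ) + ⟨k-ℓ,0⟩^(α-σ)`.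
Its sum over `ℓ` is finite for `σ - α > 3` and does not depend on `k` or `t`.
-/

/-- Euclidean norm of a lattice point `k ∈ ℤ³`, viewed as a vector of `ℝ³`. -/
noncomputable def knorm (k : Fin 3 → ℤ) : ℝ := Real.sqrt (∑ i, ((k i : ℝ)) ^ 2)

/-- Japanese bracket `⟨k, kt⟩ = √(1 + |k|² + |kt|²)`. -/
noncomputable def jb (k : Fin 3 → ℤ) (t : ℝ) : ℝ :=
  Real.sqrt (1 + (∑ i, ((k i : ℝ)) ^ 2) + (∑ i, (t * (k i : ℝ)) ^ 2))

/-- The kernel appearing in the summability claim of the product estimate: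
`A_{k,kt} · A_{ℓ,ℓt}^{-1} · A_{k-ℓ,(k-ℓ)t}^{-1} · |ℓ|^α |k-ℓ|^α / |k|^α`,
with the convention that the excluded indices `ℓ = 0` and `ℓ = k` contribute zero. -/
noncomputable def kernelTerm (γ σ α z t : ℝ) (k ℓ : Fin 3 → ℤ) : ℝ :=
  if ℓ = 0 ∨ ℓ = k then 0
  else
    (Real.exp (z * jb k t ^ γ) * jb k t ^ σ) /
      (Real.exp (z * jb ℓ t ^ γ) * jb ℓ t ^ σ *
        (Real.exp (z * jb (k - ℓ) t ^ γ) * jb (k - ℓ) t ^ σ)) *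
      (knorm ℓ ^ α * knorm (k - ℓ) ^ α / knorm k ^ α)

open Real Finset

namespace Real

lemma sqrt_one_add_sq_le_add {a b c : ℝ} (ha : 0 ≤ a) (hb : 0 ≤ b) (hc : 0 ≤ c)
    (hcab : c ≤ a + b) : √(1 + c ^ 2) ≤ √(1 + a ^ 2) + √(1 + b ^ 2) := by
  have hu : a ≤ √(1 + a ^ 2) := le_sqrt_of_sq_le (by linarith)
  have hv : b ≤ √(1 + b ^ 2) := le_sqrt_of_sq_le (by linarith)
  have hu2 : √(1 + a ^ 2) ^ 2 = 1 + a ^ 2 := sq_sqrt (by positivity)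
  have hv2 : √(1 + b ^ 2) ^ 2 = 1 + b ^ 2 := sq_sqrt (by positivity)
  refine sqrt_le_iff.mpr ⟨by positivity, ?_⟩
  nlinarith [mul_le_mul hu hv hb (ha.trans hu)]

lemma add_rpow_le_two_rpow_mul_rpow_add_rpow {a b p : ℝ} (ha : 0 ≤ a) (hb : 0 ≤ b)
    (hp : 0 ≤ p) : (a + b) ^ p ≤ 2 ^ p * (a ^ p + b ^ p) := calc
  (a + b) ^ p ≤ (2 * max a b) ^ p := by
    gcongr; rw [two_mul]; exact add_le_add (le_max_left a b) (le_max_right a b)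
  _ = 2 ^ p * max (a ^ p) (b ^ p) := by
    rw [mul_rpow zero_le_two (ha.trans (le_max_left a b)), rpow_max ha hb hp]
  _ ≤ 2 ^ p * (a ^ p + b ^ p) := by
    gcongr; exact max_le_add_of_nonneg (by positivity) (by positivity)

lemma exp_mul_rpow_le_of_le_add {a b c z γ : ℝ} (ha : 0 ≤ a) (hb : 0 ≤ b) (hc : 0 ≤ c)
    (hcab : c ≤ a + b) (hz : 0 ≤ z) (hγ0 : 0 ≤ γ) (hγ1 : γ ≤ 1) :
    exp (z * c ^ γ) ≤ exp (z * a ^ γ) * exp (z * b ^ γ) := by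
  rw [← exp_add, ← mul_add]
  gcongr
  exact (rpow_le_rpow hc hcab hγ0).trans (rpow_add_le_add_rpow ha hb hγ0 hγ1)

end Real

lemma summable_pi_prod_of_nonneg {ι β : Type*} [Fintype ι] {f : β → ℝ}
    (hf : 0 ≤ f) (hs : Summable f) : Summable fun m : ι → β => ∏ i, f (m i) := by
  classical
  refine summable_of_sum_le (c := ∏ _i : ι, ∑' n, f n)
    (fun m => prod_nonneg fun i _ => hf _) fun s => ?_
  calc ∑ m ∈ s, ∏ i, f (m i)
      ≤ ∑ m ∈ Fintype.piFinset fun i => s.image (· i), ∏ i, f (m i) :=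
        sum_le_sum_of_subset_of_nonneg (fun m hm => Fintype.mem_piFinset.mpr
          fun i => mem_image_of_mem _ hm) fun m _ _ => prod_nonneg fun i _ => hf _
    _ = ∏ i, ∑ n ∈ s.image (· i), f n := (prod_univ_sum _ fun _ => f).symm
    _ ≤ ∏ _i : ι, ∑' n, f n :=
        prod_le_prod (fun i _ => sum_nonneg fun n _ => hf n)
          fun i _ => hs.sum_le_tsum _ fun n _ => hf n

lemma summable_one_add_sq_int_rpow_neg {q : ℝ} (hq : 1 / 2 < q) :
    Summable fun n : ℤ => (1 + (n : ℝ) ^ 2) ^ (-q) := by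
  refine (summable_abs_int_rpow (b := 2 * q) (by linarith)).of_norm_bounded_eventually ?_
  filter_upwards [Filter.eventually_cofinite_ne 0] with n hn
  have hn2 : 0 < (n : ℝ) ^ 2 := by positivity
  rw [norm_of_nonneg (by positivity), show -(2 * q) = 2 * -q by ring,
    rpow_mul (abs_nonneg _), rpow_two, sq_abs]
  exact rpow_le_rpow_of_nonpos hn2 (by linarith) (by linarith)

lemma summable_one_add_sum_sq_rpow_neg {ι : Type*} [Fintype ι] {p : ℝ}
    (hp : Fintype.card ι / 2 < p) :
    Summable fun m : ι → ℤ => (1 + ∑ i, (m i : ℝ) ^ 2) ^ (-p) := by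
  rcases isEmpty_or_nonempty ι with hι | hι
  · exact .of_finite
  set d : ℝ := (Fintype.card ι : ℝ)
  have hd : 0 < d := by positivity
  have hq : 1 / 2 < p / d := by rw [lt_div_iff₀ hd]; linarith
  refine (summable_pi_prod_of_nonneg (fun n => by positivity)
    (summable_one_add_sq_int_rpow_neg hq)).of_nonneg_of_le (fun m => by positivity) fun m => ?_
  set S := ∑ i, (m i : ℝ) ^ 2
  have hprod : ∏ i, (1 + (m i : ℝ) ^ 2) ≤ (1 + S) ^ d := by
    rw [rpow_natCast, ← card_univ, ← prod_const]
    refine prod_le_prod (fun i _ => by positivity) fun i _ => ?_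
    gcongr
    exact single_le_sum (f := fun j => (m j : ℝ) ^ 2) (fun j _ => by positivity) (mem_univ i)
  calc (1 + S) ^ (-p) = ((1 + S) ^ d) ^ (-(p / d)) := by
        rw [← rpow_mul (by positivity)]; field_simp
    _ ≤ (∏ i, (1 + (m i : ℝ) ^ 2)) ^ (-(p / d)) :=
        rpow_le_rpow_of_nonpos (prod_pos fun i _ => by positivity) hprod
          (neg_nonpos.mpr (by positivity))
    _ = ∏ i, (1 + (m i : ℝ) ^ 2) ^ (-(p / d)) :=
        (finsetProd_rpow _ _ (fun i _ => by positivity) _).symm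

lemma knorm_nonneg (k : Fin 3 → ℤ) : 0 ≤ knorm k := sqrt_nonneg _

lemma knorm_eq_norm (k : Fin 3 → ℤ) :
    knorm k = ‖(WithLp.toLp 2 fun i => (k i : ℝ) : EuclideanSpace ℝ (Fin 3))‖ := by
  simp [knorm, EuclideanSpace.norm_eq]

lemma knorm_le_add_knorm_sub (k ℓ : Fin 3 → ℤ) : knorm k ≤ knorm ℓ + knorm (k - ℓ) := by
  have hsplit : (WithLp.toLp 2 fun i => (k i : ℝ) : EuclideanSpace ℝ (Fin 3)) =
      WithLp.toLp 2 (fun i => (ℓ i : ℝ)) + WithLp.toLp 2 (fun i => ((k - ℓ) i : ℝ)) := by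
    ext i; simp
  simp only [knorm_eq_norm, hsplit]
  exact norm_add_le _ _

lemma one_le_knorm {k : Fin 3 → ℤ} (hk : k ≠ 0) : 1 ≤ knorm k := by
  obtain ⟨i, hi⟩ := Function.ne_iff.mp hk
  have hki : (1 : ℝ) ≤ (k i : ℝ) ^ 2 := by
    rw [← sq_abs]; exact one_le_pow₀ (by exact_mod_cast Int.one_le_abs hi)
  exact one_le_sqrt.mpr (hki.trans
    (single_le_sum (f := fun j => (k j : ℝ) ^ 2) (fun j _ => by positivity) (mem_univ i)))

lemma jb_eq (k : Fin 3 → ℤ) (t : ℝ) : jb k t = √(1 + (√(1 + t ^ 2) * knorm k) ^ 2) := by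
  rw [jb, knorm, mul_pow, sq_sqrt (by positivity), sq_sqrt (by positivity), mul_sum]
  simp only [mul_pow, add_mul, one_mul, sum_add_distrib, add_assoc]

lemma one_le_jb (k : Fin 3 → ℤ) (t : ℝ) : 1 ≤ jb k t := by
  rw [jb_eq]; exact one_le_sqrt.mpr (le_add_of_nonneg_right (sq_nonneg _))

lemma jb_pos (k : Fin 3 → ℤ) (t : ℝ) : 0 < jb k t := one_pos.trans_le (one_le_jb k t)

lemma jb_le_add_jb_sub (k ℓ : Fin 3 → ℤ) (t : ℝ) : jb k t ≤ jb ℓ t + jb (k - ℓ) t := by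
  simp only [jb_eq]
  have := sqrt_nonneg (1 + t ^ 2)
  exact sqrt_one_add_sq_le_add (mul_nonneg this (knorm_nonneg _))
    (mul_nonneg this (knorm_nonneg _)) (mul_nonneg this (knorm_nonneg _))
    (by rw [← mul_add]; exact mul_le_mul_of_nonneg_left (knorm_le_add_knorm_sub k ℓ) this)

lemma mul_knorm_le_jb (k : Fin 3 → ℤ) (t : ℝ) : √(1 + t ^ 2) * knorm k ≤ jb k t := by
  rw [jb_eq]; exact le_sqrt_of_sq_le (by linarith)

lemma jb_le_sqrt_two_mul {k : Fin 3 → ℤ} (hk : k ≠ 0) (t : ℝ) :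
    jb k t ≤ √2 * (√(1 + t ^ 2) * knorm k) := by
  have h1 : 1 ≤ √(1 + t ^ 2) * knorm k :=
    one_le_mul_of_one_le_of_one_le (one_le_sqrt.mpr (by nlinarith)) (one_le_knorm hk)
  calc jb k t ≤ √(2 * (√(1 + t ^ 2) * knorm k) ^ 2) := by
        rw [jb_eq]; exact sqrt_le_sqrt (by nlinarith)
    _ = √2 * (√(1 + t ^ 2) * knorm k) := by rw [sqrt_mul zero_le_two, sqrt_sq (by linarith)]

lemma jb_zero_le (k : Fin 3 → ℤ) (t : ℝ) : jb k 0 ≤ jb k t := by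
  refine sqrt_le_sqrt ?_
  simp only [zero_mul, zero_pow two_ne_zero, sum_const_zero, add_zero]
  exact le_add_of_nonneg_right (by positivity)

lemma knorm_mul_knorm_sub_div_le {k : Fin 3 → ℤ} (hk : k ≠ 0) (ℓ : Fin 3 → ℤ) (t : ℝ) :
    knorm ℓ * knorm (k - ℓ) / knorm k ≤ √2 * (jb ℓ t * jb (k - ℓ) t / jb k t) := by
  set ρ := √(1 + t ^ 2)
  have hρ : 1 ≤ ρ := one_le_sqrt.mpr (by nlinarith)
  have hprod := mul_nonneg (knorm_nonneg ℓ) (knorm_nonneg (k - ℓ))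
  have hρprod : ρ * (knorm ℓ * knorm (k - ℓ)) ≤ jb ℓ t * jb (k - ℓ) t := calc
    _ ≤ ρ * knorm ℓ * (ρ * knorm (k - ℓ)) := by nlinarith [mul_nonneg (sub_nonneg.mpr hρ) hprod]
    _ ≤ _ := mul_le_mul (mul_knorm_le_jb ℓ t) (mul_knorm_le_jb (k - ℓ) t)
        (mul_nonneg (sqrt_nonneg _) (knorm_nonneg _)) (jb_pos ℓ t).le
  have hk0 : 0 < knorm k := one_pos.trans_le (one_le_knorm hk)
  rw [mul_div_assoc', div_le_div_iff₀ hk0 (jb_pos k t)]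
  calc knorm ℓ * knorm (k - ℓ) * jb k t
      ≤ knorm ℓ * knorm (k - ℓ) * (√2 * (ρ * knorm k)) :=
        mul_le_mul_of_nonneg_left (jb_le_sqrt_two_mul hk t) hprod
    _ = √2 * knorm k * (ρ * (knorm ℓ * knorm (k - ℓ))) := by ring
    _ ≤ √2 * knorm k * (jb ℓ t * jb (k - ℓ) t) := by gcongr
    _ = _ := by ring

lemma kernelTerm_le_rpow {γ σ α z t : ℝ} (hγ0 : 0 ≤ γ) (hγ1 : γ ≤ 1) (hα : 0 ≤ α) (hz : 0 ≤ z)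
    {k : Fin 3 → ℤ} (hk : k ≠ 0) (ℓ : Fin 3 → ℤ) :
    kernelTerm γ σ α z t k ℓ ≤ √2 ^ α * (jb k t / (jb ℓ t * jb (k - ℓ) t)) ^ (σ - α) := by
  set A := jb k t
  set B := jb ℓ t
  set D := jb (k - ℓ) t
  have hA := jb_pos k t
  have hB := jb_pos ℓ t
  have hD := jb_pos (k - ℓ) t
  set x := A / (B * D)
  have hx : 0 < x := by positivity
  unfold kernelTerm
  split_ifs
  · positivity
  have hexp : exp (z * A ^ γ) ≤ exp (z * B ^ γ) * exp (z * D ^ γ) :=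
    exp_mul_rpow_le_of_le_add hB.le hD.le hA.le (jb_le_add_jb_sub k ℓ t) hz hγ0 hγ1
  have hweight : knorm ℓ ^ α * knorm (k - ℓ) ^ α / knorm k ^ α ≤ (√2 * x⁻¹) ^ α := by
    have hprod := mul_nonneg (knorm_nonneg ℓ) (knorm_nonneg (k - ℓ))
    rw [← mul_rpow (knorm_nonneg _) (knorm_nonneg _), ← div_rpow hprod (knorm_nonneg _), inv_div]
    exact rpow_le_rpow (div_nonneg hprod (knorm_nonneg _))
      (knorm_mul_knorm_sub_div_le hk ℓ t) hα
  calc exp (z * A ^ γ) * A ^ σ / (exp (z * B ^ γ) * B ^ σ * (exp (z * D ^ γ) * D ^ σ)) *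
        (knorm ℓ ^ α * knorm (k - ℓ) ^ α / knorm k ^ α)
      = exp (z * A ^ γ) / (exp (z * B ^ γ) * exp (z * D ^ γ)) * x ^ σ *
        (knorm ℓ ^ α * knorm (k - ℓ) ^ α / knorm k ^ α) := by
        rw [div_rpow hA.le (by positivity), mul_rpow hB.le hD.le]; ring
    _ ≤ 1 * x ^ σ * (√2 * x⁻¹) ^ α := by
        gcongr
        · exact div_nonneg (mul_nonneg (rpow_nonneg (knorm_nonneg _) _)
            (rpow_nonneg (knorm_nonneg _) _)) (rpow_nonneg (knorm_nonneg _) _)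
        · exact div_le_one_of_le₀ hexp (by positivity)
    _ = √2 ^ α * x ^ (σ - α) := by
        rw [mul_rpow (sqrt_nonneg 2) (inv_nonneg.mpr hx.le), inv_rpow hx.le, rpow_sub hx]; ring

lemma kernelTerm_nonneg (γ σ α z t : ℝ) (k ℓ : Fin 3 → ℤ) : 0 ≤ kernelTerm γ σ α z t k ℓ := by
  unfold kernelTerm knorm jb
  split_ifs <;> positivity

lemma kernelTerm_le {γ σ α z t : ℝ} (hγ0 : 0 ≤ γ) (hγ1 : γ ≤ 1) (hα : 0 ≤ α) (hασ : α ≤ σ)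
    (hz : 0 ≤ z) {k : Fin 3 → ℤ} (hk : k ≠ 0) (ℓ : Fin 3 → ℤ) :
    kernelTerm γ σ α z t k ℓ ≤
      √2 ^ α * 2 ^ (σ - α) * ((jb ℓ 0)⁻¹ ^ (σ - α) + (jb (k - ℓ) 0)⁻¹ ^ (σ - α)) := by
  have hB := jb_pos ℓ t
  have hD := jb_pos (k - ℓ) t
  have hx : jb k t / (jb ℓ t * jb (k - ℓ) t) ≤ (jb ℓ 0)⁻¹ + (jb (k - ℓ) 0)⁻¹ := calc
    _ ≤ (jb ℓ t + jb (k - ℓ) t) / (jb ℓ t * jb (k - ℓ) t) := by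
      gcongr; exact jb_le_add_jb_sub k ℓ t
    _ = (jb ℓ t)⁻¹ + (jb (k - ℓ) t)⁻¹ := by field_simp; ring
    _ ≤ _ := add_le_add (inv_anti₀ (jb_pos ℓ 0) (jb_zero_le ℓ t))
        (inv_anti₀ (jb_pos (k - ℓ) 0) (jb_zero_le (k - ℓ) t))
  have hτ : 0 ≤ σ - α := sub_nonneg.mpr hασ
  have hl0 := (inv_pos.mpr (jb_pos ℓ 0)).le
  have hkl0 := (inv_pos.mpr (jb_pos (k - ℓ) 0)).le
  calc kernelTerm γ σ α z t k ℓ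
      ≤ √2 ^ α * (jb k t / (jb ℓ t * jb (k - ℓ) t)) ^ (σ - α) :=
        kernelTerm_le_rpow hγ0 hγ1 hα hz hk ℓ
    _ ≤ √2 ^ α * ((jb ℓ 0)⁻¹ + (jb (k - ℓ) 0)⁻¹) ^ (σ - α) := by
        gcongr
        exact div_nonneg (jb_pos k t).le (mul_pos hB hD).le
    _ ≤ √2 ^ α * (2 ^ (σ - α) * ((jb ℓ 0)⁻¹ ^ (σ - α) + (jb (k - ℓ) 0)⁻¹ ^ (σ - α))) := by
        gcongr; exact add_rpow_le_two_rpow_mul_rpow_add_rpow hl0 hkl0 hτ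
    _ = _ := by ring

lemma summable_inv_jb_zero_rpow {τ : ℝ} (hτ : 3 < τ) :
    Summable fun m : Fin 3 → ℤ => (jb m 0)⁻¹ ^ τ := by
  refine (summable_one_add_sum_sq_rpow_neg (ι := Fin 3) (p := τ / 2)
    (by simp only [Fintype.card_fin, Nat.cast_ofNat]; linarith)).congr
    fun m => ?_
  have hjb : jb m 0 = √(1 + ∑ i, (m i : ℝ) ^ 2) := by simp [jb]
  rw [hjb, inv_rpow (sqrt_nonneg _), ← rpow_neg (sqrt_nonneg _), sqrt_eq_rpow,
    ← rpow_mul (by positivity)]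
  ring_nf

lemma hasSum_add_comp_sub {G α : Type*} [AddCommGroup G] [AddCommMonoid α] [TopologicalSpace α]
    [ContinuousAdd α] {g : G → α} {S : α} (hg : HasSum g S) (k : G) :
    HasSum (fun ℓ => g ℓ + g (k - ℓ)) (S + S) :=
  hg.add ((Equiv.subLeft k).hasSum_iff.mpr hg)

theorem kernel_summability_general {γ σ α : ℝ} (hγ0 : 0 < γ) (hγ1 : γ ≤ 1)
    (hα0 : 0 ≤ α) (hσα : 3 < σ - α) :
    ∃ C : ℝ, 0 < C ∧ ∀ z t : ℝ, 0 ≤ z → 0 ≤ t → ∀ k : Fin 3 → ℤ, k ≠ 0 →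
      Summable (fun ℓ : Fin 3 → ℤ => kernelTerm γ σ α z t k ℓ) ∧
      (∑' ℓ : Fin 3 → ℤ, kernelTerm γ σ α z t k ℓ) ≤ C := by
  set g : (Fin 3 → ℤ) → ℝ := fun m => (jb m 0)⁻¹ ^ (σ - α)
  have hg_pos (m : Fin 3 → ℤ) : 0 < g m := rpow_pos_of_pos (inv_pos.mpr (jb_pos m 0)) _
  have hg : Summable g := summable_inv_jb_zero_rpow hσα
  set M := √2 ^ α * 2 ^ (σ - α)
  have hS : 0 < ∑' m, g m := hg.tsum_pos (fun m => (hg_pos m).le) 0 (hg_pos 0)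
  refine ⟨M * (∑' m, g m + ∑' m, g m), by positivity, fun z t hz _ k hk => ?_⟩
  have hmajorant := (hasSum_add_comp_sub hg.hasSum k).mul_left M
  have hle (ℓ : Fin 3 → ℤ) : kernelTerm γ σ α z t k ℓ ≤ M * (g ℓ + g (k - ℓ)) :=
    kernelTerm_le hγ0.le hγ1 hα0 (by linarith) hz hk ℓ
  have hsum := hmajorant.summable.of_nonneg_of_le (kernelTerm_nonneg γ σ α z t k) hle
  exact ⟨hsum, hasSum_le hle hsum.hasSum hmajorant⟩

/-- Key kernel-summability claim in the proof of the product estimate for `F`. -/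
theorem kernel_summability {γ σ α : ℝ} (hγ0 : 0 < γ) (hγ1 : γ ≤ 1)
    (hσ : 3 < σ) (hα0 : 0 ≤ α) (hα : α < 1 / 2) (hσα : 3 < σ - α) :
    ∃ C : ℝ, 0 < C ∧ ∀ z t : ℝ, 0 ≤ z → 0 ≤ t → ∀ k : Fin 3 → ℤ, k ≠ 0 →
      Summable (fun ℓ : Fin 3 → ℤ => kernelTerm γ σ α z t k ℓ) ∧
      (∑' ℓ : Fin 3 → ℤ, kernelTerm γ σ α z t k ℓ) ≤ C :=
  kernel_summability_general hγ0 hγ1 hα0 hσα
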